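/- Simplex–tangent space angle bound: Let M ⊆ EuclideanSpace ℝ (Fin N), let v₀, …, v_j ∈ M be affinely independent points spanning a j-simplex σ with thickness t and longest edge length L, let p = v₀, let R > 0, and let T be a linear subspace of dimension at least j such that infDist (z − p) T ≤ ‖z − p‖²/(2R) for all z ∈ M. Then sin ∠(σ, T) ≤ L/(tR); that is, for every vector u in the direction of the affine span of v₀, …, v_j, infDist u T ≤ (L/(tR))·‖u‖. -/

import Mathlib

/-!
Write `u = ∑ cᵢ (vᵢ - v₀)`. Comparing `u` with the facet opposite `vᵢ` gives `|cᵢ| a ≤ ‖u‖`, while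
the tangent estimate gives `infDist (vᵢ - v₀) T ≤ L² / (2R)`. Distance to a subspace is the quotient
norm, hence a seminorm, so `infDist u T ≤ ∑ |cᵢ| L² / (2R) ≤ j L² ‖u‖ / (2aR)`, which is half of
`L ‖u‖ / (tR)`.
-/

open Metric Finset

section

variable {E : Type*} [NormedAddCommGroup E] [NormedSpace ℝ E] {ι : Type*}

theorem infDist_sum_smul_le (K : Submodule ℝ E) (s : Finset ι) (c : ι → ℝ)
    (x : ι → E) :
    infDist (∑ i ∈ s, c i • x i) K ≤ ∑ i ∈ s, |c i| * infDist (x i) K := by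
  have hmk (y : E) : infDist y K = ‖K.mkQ y‖ :=
    (QuotientAddGroup.norm_mk (S := K.toAddSubgroup) y).symm
  simp only [hmk, map_sum, map_smul]
  refine (norm_sum_le _ _).trans_eq (sum_congr rfl fun i _ => ?_)
  rw [norm_smul, Real.norm_eq_abs]

variable [Fintype ι]

theorem abs_mul_infDist_affineSpan_compl_le (v : ι → E) (c : ι → ℝ) {i b : ι} (hib : i ≠ b) :
    |c i| * infDist (v i) (affineSpan ℝ (v '' {i}ᶜ)) ≤ ‖∑ k, c k • (v k - v b)‖ := by
  classical
  set S := affineSpan ℝ (v '' {i}ᶜ)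
  set w := ∑ k ∈ univ.erase i, c k • (v k - v b)
  have hvS {k : ι} (hk : k ≠ i) : v k ∈ S := subset_affineSpan ℝ _ ⟨k, hk, rfl⟩
  have hw : w ∈ S.direction := Submodule.sum_mem _ fun k hk =>
    S.direction.smul_mem _ <|
      AffineSubspace.vsub_mem_direction (hvS (ne_of_mem_erase hk)) (hvS hib.symm)
  have hsplit : ∑ k, c k • (v k - v b) = c i • (v i - v b) + w :=
    (add_sum_erase _ _ (mem_univ i)).symm
  rcases eq_or_ne (c i) 0 with hci | hci
  · simp [hci]
  have hq : (c i)⁻¹ • -w +ᵥ v b ∈ S :=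
    AffineSubspace.vadd_mem_of_mem_direction (S.direction.smul_mem _ (neg_mem hw)) (hvS hib.symm)
  calc |c i| * infDist (v i) S ≤ |c i| * dist (v i) ((c i)⁻¹ • -w +ᵥ v b) := by
        gcongr; exact infDist_le_dist_of_mem hq
    _ = ‖∑ k, c k • (v k - v b)‖ := by
        rw [hsplit, dist_eq_norm, ← Real.norm_eq_abs, ← norm_smul, vadd_eq_add]
        congr 1
        rw [smul_sub, smul_add, smul_smul, mul_inv_cancel₀ hci]
        module

theorem AffineIndependent.infDist_affineSpan_compl_pos [Nontrivial ι] {v : ι → E}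
    (hv : AffineIndependent ℝ v) (i : ι) :
    0 < infDist (v i) (affineSpan ℝ (v '' {i}ᶜ)) := by
  obtain ⟨k, hk⟩ := exists_ne i
  have hne : (affineSpan ℝ (v '' {i}ᶜ) : Set E).Nonempty :=
    ⟨v k, subset_affineSpan ℝ _ ⟨k, hk, rfl⟩⟩
  refine ((AffineSubspace.closed_of_finiteDimensional _).notMem_iff_infDist_pos hne).mp ?_
  simpa [Set.compl_eq_univ_sdiff] using hv.notMem_affineSpan_sdiff i Set.univ

theorem infDist_le_of_mem_direction_affineSpan {n : ℕ} {v : Fin (n + 1) → E}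
    (K : Submodule ℝ E) {a δ : ℝ} (ha : 0 < a)
    (halt : ∀ i, a ≤ infDist (v i) (affineSpan ℝ (v '' {i}ᶜ)))
    (hδ : ∀ i, infDist (v i - v 0) K ≤ δ) {u : E}
    (hu : u ∈ (affineSpan ℝ (Set.range v)).direction) :
    infDist u K ≤ n * δ / a * ‖u‖ := by
  rw [direction_affineSpan, vectorSpan_range_eq_span_range_vsub_right ℝ v 0] at hu
  obtain ⟨c, rfl⟩ := (Submodule.mem_span_range_iff_exists_fun ℝ).mp hu
  simp only [vsub_eq_sub] at *
  have hc (i : Fin n) : |c i.succ| ≤ ‖∑ k, c k • (v k - v 0)‖ / a := by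
    rw [le_div_iff₀ ha]
    exact (mul_le_mul_of_nonneg_left (halt _) (abs_nonneg _)).trans
      (abs_mul_infDist_affineSpan_compl_le v c (Fin.succ_ne_zero i))
  calc infDist (∑ i, c i • (v i - v 0)) K ≤ ∑ i, |c i| * infDist (v i - v 0) K :=
        infDist_sum_smul_le K _ _ _
    _ = ∑ i : Fin n, |c i.succ| * infDist (v i.succ - v 0) K := by
        simp [Fin.sum_univ_succ, infDist_zero_of_mem K.zero_mem]
    _ ≤ ∑ _i : Fin n, ‖∑ k, c k • (v k - v 0)‖ / a * δ := by
        gcongr with i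
        exacts [infDist_nonneg, hc i, hδ _]
    _ = n * δ / a * ‖∑ k, c k • (v k - v 0)‖ := by
        simp only [sum_const, card_univ, Fintype.card_fin, nsmul_eq_mul]; ring

end

theorem simplex_tangent_space_angle_bound_general {N j : ℕ}
    (M : Set (EuclideanSpace ℝ (Fin N)))
    (v : Fin (j + 1) → EuclideanSpace ℝ (Fin N))
    (hv : AffineIndependent ℝ v) (hvM : ∀ i, v i ∈ M)
    (L a t : ℝ)
    (hL : IsGreatest {d : ℝ | ∃ i k : Fin (j + 1), i ≠ k ∧ d = ‖v i - v k‖} L)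
    (ha : IsLeast {d : ℝ | ∃ i : Fin (j + 1),
      d = Metric.infDist (v i) (affineSpan ℝ (v '' {i}ᶜ) : Set (EuclideanSpace ℝ (Fin N)))} a)
    (ht : t = a / (j * L))
    (R : ℝ) (hR : 0 < R)
    (T : Submodule ℝ (EuclideanSpace ℝ (Fin N)))
    (hfed : ∀ z ∈ M, Metric.infDist (z - v 0) (T : Set (EuclideanSpace ℝ (Fin N))) ≤
      ‖z - v 0‖ ^ 2 / (2 * R)) :
    ∀ u ∈ (affineSpan ℝ (Set.range v)).direction,
      Metric.infDist u (T : Set (EuclideanSpace ℝ (Fin N))) ≤ (L / (t * R)) * ‖u‖ := by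
  intro u hu
  obtain ⟨⟨i₁, k₁, hik, hL₁⟩, hLmax⟩ := hL
  have : Nontrivial (Fin (j + 1)) := nontrivial_of_ne i₁ k₁ hik
  have hL0 : 0 ≤ L := hL₁ ▸ norm_nonneg _
  obtain ⟨⟨i₀, ha₀⟩, hamin⟩ := ha
  have ha0 : 0 < a := ha₀ ▸ hv.infDist_affineSpan_compl_pos i₀
  have hedge (i : Fin (j + 1)) : ‖v i - v 0‖ ≤ L := by
    rcases eq_or_ne i 0 with rfl | hi
    · simpa using hL0
    · exact hLmax ⟨i, 0, hi, rfl⟩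
  have hvT (i : Fin (j + 1)) : infDist (v i - v 0) T ≤ L ^ 2 / (2 * R) :=
    (hfed _ (hvM i)).trans (by gcongr; exact hedge i)
  refine (infDist_le_of_mem_direction_affineSpan T ha0 (fun i => hamin ⟨i, rfl⟩) hvT hu).trans ?_
  have hrate : L / (t * R) = 2 * (j * (L ^ 2 / (2 * R)) / a) := by
    rw [ht]
    field_simp
  rw [hrate]
  gcongr
  exact le_mul_of_one_le_left (by positivity) one_le_two

/-- **Simplex–tangent space angle bound.** Let `σ` be a `j`-simplex with vertices on `M`,
thickness `t`, longest edge length `L`, and vertex `p = v 0`. If `T` is a linear subspace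
of dimension at least `j` satisfying Federer's tangent estimate at `p` with reach bound
`R`, then `sin ∠(σ, T) ≤ L/(tR)`. -/
theorem simplex_tangent_space_angle_bound {N j : ℕ} (hj : 1 ≤ j)
    (M : Set (EuclideanSpace ℝ (Fin N)))
    (v : Fin (j + 1) → EuclideanSpace ℝ (Fin N))
    (hv : AffineIndependent ℝ v) (hvM : ∀ i, v i ∈ M)
    (L a t : ℝ)
    (hL : IsGreatest {d : ℝ | ∃ i k : Fin (j + 1), i ≠ k ∧ d = ‖v i - v k‖} L)
    (ha : IsLeast {d : ℝ | ∃ i : Fin (j + 1),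
      d = Metric.infDist (v i) (affineSpan ℝ (v '' {i}ᶜ) : Set (EuclideanSpace ℝ (Fin N)))} a)
    (ht : t = a / (j * L))
    (R : ℝ) (hR : 0 < R)
    (T : Submodule ℝ (EuclideanSpace ℝ (Fin N)))
    (hdim : j ≤ Module.finrank ℝ T)
    (hfed : ∀ z ∈ M, Metric.infDist (z - v 0) (T : Set (EuclideanSpace ℝ (Fin N))) ≤
      ‖z - v 0‖ ^ 2 / (2 * R)) :
    ∀ u ∈ (affineSpan ℝ (Set.range v)).direction,
      Metric.infDist u (T : Set (EuclideanSpace ℝ (Fin N))) ≤ (L / (t * R)) * ‖u‖ :=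
  simplex_tangent_space_angle_bound_general M v hv hvM L a t hL ha ht R hR T hfed
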